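/- arXiv:nlin/0703008 — 7 statements merged into one kernel-verified Lean document; each statement's English description precedes it below -/
import Mathlib

section
/- Let h>0 and ω<0, set c = 2 − ωh² (so c > 2) and W̃ = arccosh(c/2) > 0. Let α₁, α₂ be real numbers, not both zero, let ξ ∈ ℝ, and define for n ∈ ℤ: Q_n = (α₁/√(α₁²+α₂²))·(sinh(W̃)/h)·sech(W̃n + ξ) and P_n = (α₂/√(α₁²+α₂²))·(sinh(W̃)/h)·sech(W̃n + ξ). Then for every n ∈ ℤ: (1 + h²(Q_n² + P_n²))·(Q_{n+1} + Q_{n−1}) = c·Q_n and (1 + h²(Q_n² + P_n²))·(P_{n+1} + P_{n−1}) = c·P_n. -/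
noncomputable def arcosh (x : ℝ) : ℝ := Real.log (x + Real.sqrt (x ^ 2 - 1))

lemma cosh_arcosh {y : ℝ} (hy : 1 ≤ y) : Real.cosh (arcosh y) = y := by
  have ht : Real.sqrt (y ^ 2 - 1) ^ 2 = y ^ 2 - 1 :=
    Real.sq_sqrt (by nlinarith)
  have htn : 0 ≤ Real.sqrt (y ^ 2 - 1) := Real.sqrt_nonneg _
  have hpos : 0 < y + Real.sqrt (y ^ 2 - 1) := by nlinarith
  rw [arcosh, Real.cosh_eq, Real.exp_log hpos, Real.exp_neg, Real.exp_log hpos]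
  field_simp
  nlinarith

lemma key (h c W a x : ℝ) (hh : h ≠ 0) (hcW : Real.cosh W = c / 2) :
    (1 + h ^ 2 * ((Real.sinh W / h) ^ 2 * ((Real.cosh x)⁻¹) ^ 2)) *
      (a * (Real.sinh W / h) * (Real.cosh (x + W))⁻¹ +
       a * (Real.sinh W / h) * (Real.cosh (x - W))⁻¹) =
    c * (a * (Real.sinh W / h) * (Real.cosh x)⁻¹) := by
  have h1 := Real.cosh_sq x
  have h2 := Real.cosh_sq W
  rw [Real.cosh_add, Real.cosh_sub]
  have hx := (Real.cosh_pos x).ne'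
  have hp : Real.cosh x * Real.cosh W + Real.sinh x * Real.sinh W ≠ 0 := by
    rw [← Real.cosh_add]; exact (Real.cosh_pos _).ne'
  have hm : Real.cosh x * Real.cosh W - Real.sinh x * Real.sinh W ≠ 0 := by
    rw [← Real.cosh_sub]; exact (Real.cosh_pos _).ne'
  have hp' : Real.cosh x * Real.cosh W + Real.sinh W * Real.sinh x ≠ 0 := by
    rw [mul_comm (Real.sinh W)]; exact hp
  have hm' : Real.cosh x * Real.cosh W - Real.sinh W * Real.sinh x ≠ 0 := by
    rw [mul_comm (Real.sinh W)]; exact hm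
  field_simp
  linear_combination (a * Real.sinh W * Real.cosh x) *
    ( 2 * (Real.cosh x ^ 2 * Real.cosh W ^ 2 - Real.sinh x ^ 2 * Real.sinh W ^ 2) * hcW
      - 2 * Real.cosh W * Real.cosh x ^ 2 * h2
      - 2 * Real.cosh W * Real.sinh W ^ 2 * h1 )

/-- The explicit two-component sech-profile sequences solve the stationary
integrable coupled discrete NLS (vector Ablowitz–Ladik) equations. -/
theorem vector_AL_soliton (h ω : ℝ) (hh : 0 < h) (hω : ω < 0)
    (α₁ α₂ ξ : ℝ) (hα : ¬(α₁ = 0 ∧ α₂ = 0))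
    (c : ℝ) (hc : c = 2 - ω * h ^ 2)
    (W : ℝ) (hW : W = arcosh (c / 2))
    (Q P : ℤ → ℝ)
    (hQ : ∀ n : ℤ, Q n = (α₁ / Real.sqrt (α₁ ^ 2 + α₂ ^ 2)) *
      (Real.sinh W / h) * (Real.cosh (W * n + ξ))⁻¹)
    (hP : ∀ n : ℤ, P n = (α₂ / Real.sqrt (α₁ ^ 2 + α₂ ^ 2)) *
      (Real.sinh W / h) * (Real.cosh (W * n + ξ))⁻¹) :
    ∀ n : ℤ,
      (1 + h ^ 2 * (Q n ^ 2 + P n ^ 2)) * (Q (n + 1) + Q (n - 1)) = c * Q n ∧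
      (1 + h ^ 2 * (Q n ^ 2 + P n ^ 2)) * (P (n + 1) + P (n - 1)) = c * P n := by
  have hc2 : (1 : ℝ) ≤ c / 2 := by nlinarith
  have hcW : Real.cosh W = c / 2 := by rw [hW]; exact cosh_arcosh hc2
  have hr2 : α₁ ^ 2 + α₂ ^ 2 ≠ 0 := by
    intro h0
    exact hα ⟨by nlinarith [sq_nonneg α₁, sq_nonneg α₂], by nlinarith [sq_nonneg α₁, sq_nonneg α₂]⟩
  have hrs : Real.sqrt (α₁ ^ 2 + α₂ ^ 2) ^ 2 = α₁ ^ 2 + α₂ ^ 2 :=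
    Real.sq_sqrt (by positivity)
  have hrne : Real.sqrt (α₁ ^ 2 + α₂ ^ 2) ≠ 0 := by
    intro h0; rw [h0] at hrs; simp at hrs; exact hr2 hrs.symm
  intro n
  have hsum : Q n ^ 2 + P n ^ 2 =
      (Real.sinh W / h) ^ 2 * ((Real.cosh (W * n + ξ))⁻¹) ^ 2 := by
    rw [hQ, hP]
    field_simp
    linear_combination -Real.sinh W ^ 2 * hrs
  have hx1 : W * ((n : ℤ) + 1 : ℤ) + ξ = (W * n + ξ) + W := by push_cast; ring
  have hx2 : W * ((n : ℤ) - 1 : ℤ) + ξ = (W * n + ξ) - W := by push_cast; ring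
  constructor
  · rw [hsum, hQ, hQ, hQ, hx1, hx2]
    exact key h c W _ (W * n + ξ) hh.ne' hcW
  · rw [hsum, hP, hP, hP, hx1, hx2]
    exact key h c W _ (W * n + ξ) hh.ne' hcW
end

section
/- Let h > 0, c ∈ ℝ, and let (q_n)_{n∈ℤ}, (p_n)_{n∈ℤ} be real sequences satisfying, for all n ∈ ℤ, (1 + h²(q_n² + p_n²))·(q_{n+1} + q_{n−1}) = c·q_n and (1 + h²(q_n² + p_n²))·(p_{n+1} + p_{n−1}) = c·p_n. Then the quantity I(n) := h²[ q_n² + q_{n−1}² − c·q_n q_{n−1} + p_n² + p_{n−1}² − c·p_n p_{n−1} + h²(q_n² + p_n²)(q_{n−1}² + p_{n−1}²) ] satisfies I(n+1) = I(n) for all n ∈ ℤ; i.e. I is an invariant of the integrable standard-like map given by the stationary vector Ablowitz–Ladik equations. -/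
/-- The quantity `I(n)` is an invariant of the stationary vector
Ablowitz–Ladik (integrable standard-like) map. -/
theorem vector_AL_invariant (h c : ℝ) (hh : 0 < h) (q p : ℤ → ℝ)
    (hq : ∀ n : ℤ, (1 + h ^ 2 * (q n ^ 2 + p n ^ 2)) * (q (n + 1) + q (n - 1)) = c * q n)
    (hp : ∀ n : ℤ, (1 + h ^ 2 * (q n ^ 2 + p n ^ 2)) * (p (n + 1) + p (n - 1)) = c * p n)
    (I : ℤ → ℝ)
    (hI : ∀ n : ℤ, I n = h ^ 2 *
      (q n ^ 2 + q (n - 1) ^ 2 - c * q n * q (n - 1) +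
       p n ^ 2 + p (n - 1) ^ 2 - c * p n * p (n - 1) +
       h ^ 2 * (q n ^ 2 + p n ^ 2) * (q (n - 1) ^ 2 + p (n - 1) ^ 2))) :
    ∀ n : ℤ, I (n + 1) = I n := by
  intro n
  have h1 := hI (n + 1)
  have h2 := hI n
  simp only [add_sub_cancel_right] at h1
  rw [h1, h2]
  linear_combination (h ^ 2 * (q (n + 1) - q (n - 1))) * hq n +
    (h ^ 2 * (p (n + 1) - p (n - 1))) * hp n
end

section
/- Let h > 0, ε ∈ ℝ, let J ⊂ ℝ be an open interval, and let u, v : J → (ℤ → ℂ) be such that each u_n, v_n is differentiable on J and satisfies i u̇_n = −Δ₂u_n − (|u_n|²+|v_n|²)(u_{n+1}+u_{n−1}) − 2ε u_n(|u_n|²+|v_n|²) and i v̇_n = −Δ₂v_n − (|v_n|²+|u_n|²)(v_{n+1}+v_{n−1}) − 2ε v_n(|v_n|²+|u_n|²), where Δ₂w_n = (w_{n+1}−2w_n+w_{n−1})/h². Assume there is a summable sequence (M_n)_{n∈ℤ} of nonnegative reals with |u_n(t)|² + |v_n(t)|² ≤ M_n for all t ∈ J, n ∈ ℤ. Then the function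 N(t) = Σ_{n∈ℤ} ln(1 + h²(|u_n(t)|² + |v_n(t)|²)) is constant on J. -/
open Complex

lemma hasDerivAt_norm_sq {w : ℝ → ℂ} {d : ℂ} {t : ℝ} (hw : HasDerivAt w d t) :
    HasDerivAt (fun s => ‖w s‖ ^ 2) (2 * ((starRingEnd ℂ) (w t) * d).re) t := by
  have hre : HasDerivAt (fun s => (w s).re) (Complex.reCLM d) t :=
    Complex.reCLM.hasFDerivAt.comp_hasDerivAt t hw
  have him : HasDerivAt (fun s => (w s).im) (Complex.imCLM d) t :=
    Complex.imCLM.hasFDerivAt.comp_hasDerivAt t hw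
  have h2 : HasDerivAt (fun s => (w s).re * (w s).re + (w s).im * (w s).im) _ t :=
    (hre.mul hre).add (him.mul him)
  have heq : (fun s => ‖w s‖ ^ 2) = fun s => (w s).re * (w s).re + (w s).im * (w s).im := by
    funext s
    simp [Complex.sq_norm, Complex.normSq_apply]
  rw [heq]
  convert h2 using 1
  simp [Complex.mul_re, Complex.conj_re, Complex.conj_im]
  ring

lemma key_re (h P εr : ℝ) (hh : h ≠ 0) (w wp wm dw : ℂ)
    (heq : Complex.I * dw = -((wp - 2 * w + wm) / (h : ℂ) ^ 2) -
      ((P : ℝ) : ℂ) * (wp + wm) - 2 * (εr : ℂ) * w * ((P : ℝ) : ℂ)) :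
    h ^ 2 * ((starRingEnd ℂ) w * dw).re =
      -(1 + h ^ 2 * P) * (((starRingEnd ℂ) w * wp).im + ((starRingEnd ℂ) w * wm).im) := by
  have hc2 : ((h : ℂ)) ^ 2 ≠ 0 := pow_ne_zero _ (by exact_mod_cast hh)
  have heq' : (h : ℂ) ^ 2 * (Complex.I * dw) =
      -(wp - 2 * w + wm) - (h : ℂ) ^ 2 * (P : ℂ) * (wp + wm)
        - 2 * (εr : ℂ) * w * ((h : ℂ) ^ 2 * (P : ℂ)) := by
    rw [heq]
    have hx : (h : ℂ) ^ 2 * ((wp - 2 * w + wm) / (h : ℂ) ^ 2) = wp - 2 * w + wm := mul_div_cancel₀ _ hc2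
    linear_combination (-1 : ℂ) * hx
  have h1 := congrArg Complex.re heq'
  have h2 := congrArg Complex.im heq'
  obtain ⟨x, y⟩ := w
  obtain ⟨xp, yp⟩ := wp
  obtain ⟨xm, ym⟩ := wm
  obtain ⟨xd, yd⟩ := dw
  simp [Complex.mul_im, Complex.mul_re, Complex.ext_iff, ← Complex.ofReal_pow] at h1 h2 ⊢
  linear_combination x * h2 - y * h1

lemma conj_mul_im_swap (a b : ℂ) :
    ((starRingEnd ℂ) a * b).im = -((starRingEnd ℂ) b * a).im := by
  simp [Complex.mul_im, Complex.conj_re, Complex.conj_im]; ring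

/-- The nonlinearly coupled (Salerno-type) DNLS flow conserves the deformed
total norm `N(t) = Σₙ ln(1 + h²(|uₙ|² + |vₙ|²))`. -/
theorem deformed_norm_conserved_nonlinear (h ε : ℝ) (hh : 0 < h) (a b : ℝ)
    (u v du dv : ℝ → ℤ → ℂ)
    (hu : ∀ t ∈ Set.Ioo a b, ∀ n : ℤ, HasDerivAt (fun s => u s n) (du t n) t)
    (hv : ∀ t ∈ Set.Ioo a b, ∀ n : ℤ, HasDerivAt (fun s => v s n) (dv t n) t)
    (hequ : ∀ t ∈ Set.Ioo a b, ∀ n : ℤ,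
      Complex.I * du t n =
        -((u t (n + 1) - 2 * u t n + u t (n - 1)) / (h : ℂ) ^ 2) -
          ((‖u t n‖ ^ 2 + ‖v t n‖ ^ 2 : ℝ) : ℂ) * (u t (n + 1) + u t (n - 1)) -
          2 * (ε : ℂ) * u t n * ((‖u t n‖ ^ 2 + ‖v t n‖ ^ 2 : ℝ) : ℂ))
    (heqv : ∀ t ∈ Set.Ioo a b, ∀ n : ℤ,
      Complex.I * dv t n =
        -((v t (n + 1) - 2 * v t n + v t (n - 1)) / (h : ℂ) ^ 2) -
          ((‖v t n‖ ^ 2 + ‖u t n‖ ^ 2 : ℝ) : ℂ) * (v t (n + 1) + v t (n - 1)) -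
          2 * (ε : ℂ) * v t n * ((‖v t n‖ ^ 2 + ‖u t n‖ ^ 2 : ℝ) : ℂ))
    (M : ℤ → ℝ) (hM0 : ∀ n, 0 ≤ M n) (hMsum : Summable M)
    (hbd : ∀ t ∈ Set.Ioo a b, ∀ n : ℤ, ‖u t n‖ ^ 2 + ‖v t n‖ ^ 2 ≤ M n) :
    ∀ t ∈ Set.Ioo a b, ∀ s ∈ Set.Ioo a b,
      (∑' n : ℤ, Real.log (1 + h ^ 2 * (‖u t n‖ ^ 2 + ‖v t n‖ ^ 2))) =
        ∑' n : ℤ, Real.log (1 + h ^ 2 * (‖u s n‖ ^ 2 + ‖v s n‖ ^ 2)) := by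
  have hh' : h ≠ 0 := ne_of_gt hh
  set q : ℝ → ℤ → ℝ := fun r n =>
    ((starRingEnd ℂ) (u r n) * u r (n + 1)).im +
      ((starRingEnd ℂ) (v r n) * v r (n + 1)).im with hq_def
  set G : ℤ → ℝ → ℝ := fun n r => -2 * (q r n - q r (n - 1)) with hG_def
  set g : ℤ → ℝ → ℝ := fun n r =>
    Real.log (1 + h ^ 2 * (‖u r n‖ ^ 2 + ‖v r n‖ ^ 2)) with hg_def
  -- pointwise derivative
  have hP0 : ∀ r n, (0:ℝ) ≤ ‖u r n‖ ^ 2 + ‖v r n‖ ^ 2 := fun r n => by positivity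
  have hpos : ∀ r n, (0:ℝ) < 1 + h ^ 2 * (‖u r n‖ ^ 2 + ‖v r n‖ ^ 2) := fun r n => by
    have := hP0 r n; positivity
  have hderiv : ∀ r ∈ Set.Ioo a b, ∀ n : ℤ, HasDerivAt (g n) (G n r) r := by
    intro r hr n
    have hPd : HasDerivAt (fun s => ‖u s n‖ ^ 2 + ‖v s n‖ ^ 2)
        (2 * ((starRingEnd ℂ) (u r n) * du r n).re +
          2 * ((starRingEnd ℂ) (v r n) * dv r n).re) r :=
      (hasDerivAt_norm_sq (hu r hr n)).add (hasDerivAt_norm_sq (hv r hr n))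
    have hinner : HasDerivAt (fun s => 1 + h ^ 2 * (‖u s n‖ ^ 2 + ‖v s n‖ ^ 2))
        (h ^ 2 * (2 * ((starRingEnd ℂ) (u r n) * du r n).re +
          2 * ((starRingEnd ℂ) (v r n) * dv r n).re)) r :=
      (hPd.const_mul (h ^ 2)).const_add 1
    have hlog := (Real.hasDerivAt_log (ne_of_gt (hpos r n))).comp r hinner
    have hku := key_re h (‖u r n‖ ^ 2 + ‖v r n‖ ^ 2) ε hh' (u r n) (u r (n + 1))
      (u r (n - 1)) (du r n) (hequ r hr n)
    have hkv := key_re h (‖v r n‖ ^ 2 + ‖u r n‖ ^ 2) ε hh' (v r n) (v r (n + 1))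
      (v r (n - 1)) (dv r n) (heqv r hr n)
    rw [add_comm (‖v r n‖ ^ 2) (‖u r n‖ ^ 2)] at hkv
    have hval : (1 + h ^ 2 * (‖u r n‖ ^ 2 + ‖v r n‖ ^ 2))⁻¹ *
        (h ^ 2 * (2 * ((starRingEnd ℂ) (u r n) * du r n).re +
          2 * ((starRingEnd ℂ) (v r n) * dv r n).re)) = G n r := by
      have hne := ne_of_gt (hpos r n)
      have e1 : h ^ 2 * (2 * ((starRingEnd ℂ) (u r n) * du r n).re +
          2 * ((starRingEnd ℂ) (v r n) * dv r n).re)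
          = 2 * (h ^ 2 * ((starRingEnd ℂ) (u r n) * du r n).re)
            + 2 * (h ^ 2 * ((starRingEnd ℂ) (v r n) * dv r n).re) := by ring
      rw [e1, hku, hkv]
      have e2 : ((starRingEnd ℂ) (u r n) * u r (n - 1)).im
          = -((starRingEnd ℂ) (u r (n - 1)) * u r n).im := conj_mul_im_swap _ _
      have e3 : ((starRingEnd ℂ) (v r n) * v r (n - 1)).im
          = -((starRingEnd ℂ) (v r (n - 1)) * v r n).im := conj_mul_im_swap _ _
      have hn1 : (n - 1) + 1 = n := by ring
      simp only [hG_def, hq_def, hn1]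
      rw [e2, e3]
      field_simp
      ring
    rw [← hval]
    exact hlog
  -- bounds
  have hqbd : ∀ r ∈ Set.Ioo a b, ∀ n : ℤ, |q r n| ≤ (M n + M (n + 1)) / 2 := by
    intro r hr n
    have b1 : |((starRingEnd ℂ) (u r n) * u r (n + 1)).im| ≤ ‖u r n‖ * ‖u r (n + 1)‖ := by
      calc |((starRingEnd ℂ) (u r n) * u r (n + 1)).im|
          ≤ ‖(starRingEnd ℂ) (u r n) * u r (n + 1)‖ := Complex.abs_im_le_norm _
        _ = ‖u r n‖ * ‖u r (n + 1)‖ := by rw [norm_mul, Complex.norm_conj]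
    have b2 : |((starRingEnd ℂ) (v r n) * v r (n + 1)).im| ≤ ‖v r n‖ * ‖v r (n + 1)‖ := by
      calc |((starRingEnd ℂ) (v r n) * v r (n + 1)).im|
          ≤ ‖(starRingEnd ℂ) (v r n) * v r (n + 1)‖ := Complex.abs_im_le_norm _
        _ = ‖v r n‖ * ‖v r (n + 1)‖ := by rw [norm_mul, Complex.norm_conj]
    have hb1 := hbd r hr n
    have hb2 := hbd r hr (n + 1)
    have t1 : ‖u r n‖ * ‖u r (n + 1)‖ ≤ (‖u r n‖ ^ 2 + ‖u r (n + 1)‖ ^ 2) / 2 := by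
      nlinarith [sq_nonneg (‖u r n‖ - ‖u r (n + 1)‖)]
    have t2 : ‖v r n‖ * ‖v r (n + 1)‖ ≤ (‖v r n‖ ^ 2 + ‖v r (n + 1)‖ ^ 2) / 2 := by
      nlinarith [sq_nonneg (‖v r n‖ - ‖v r (n + 1)‖)]
    have := abs_add_le (((starRingEnd ℂ) (u r n) * u r (n + 1)).im)
      (((starRingEnd ℂ) (v r n) * v r (n + 1)).im)
    simp only [hq_def]
    nlinarith [this]
  have hGbd : ∀ r ∈ Set.Ioo a b, ∀ n : ℤ,
      ‖G n r‖ ≤ M (n - 1) + 2 * M n + M (n + 1) := by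
    intro r hr n
    have h1 := hqbd r hr n
    have h2 := hqbd r hr (n - 1)
    have hn1 : (n - 1) + 1 = n := by ring
    rw [hn1] at h2
    simp only [hG_def, Real.norm_eq_abs]
    have : |(-2 : ℝ) * (q r n - q r (n - 1))| = 2 * |q r n - q r (n - 1)| := by
      rw [abs_mul]; norm_num
    rw [this]
    have := abs_sub (q r n) (q r (n - 1))
    nlinarith [abs_sub_abs_le_abs_sub (q r n) (q r (n-1)), abs_sub (q r n) (q r (n-1))]
  have hsum1 : Summable (fun n : ℤ => M (n - 1)) :=
    hMsum.comp_injective (sub_left_injective)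
  have hsum2 : Summable (fun n : ℤ => M (n + 1)) :=
    hMsum.comp_injective (add_left_injective 1)
  have hbndsum : Summable (fun n : ℤ => M (n - 1) + 2 * M n + M (n + 1)) :=
    (hsum1.add (hMsum.mul_left 2)).add hsum2
  intro t ht s hs
  -- summability at base point t
  have hg0 : Summable (fun n => g n t) := by
    apply Summable.of_nonneg_of_le
      (fun n => Real.log_nonneg (by nlinarith [hP0 t n]))
      (fun n => ?_) (hMsum.mul_left (h ^ 2))
    calc g n t ≤ (1 + h ^ 2 * (‖u t n‖ ^ 2 + ‖v t n‖ ^ 2)) - 1 :=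
          Real.log_le_sub_one_of_pos (hpos t n)
      _ = h ^ 2 * (‖u t n‖ ^ 2 + ‖v t n‖ ^ 2) := by ring
      _ ≤ h ^ 2 * M n := by nlinarith [hbd t ht n, sq_nonneg h]
  -- the tsum has derivative ∑' G n r at every r in the interval
  have hN : ∀ r ∈ Set.Ioo a b,
      HasDerivAt (fun y => ∑' n, g n y) (∑' n, G n r) r := fun r hr =>
    hasDerivAt_tsum_of_isPreconnected hbndsum isOpen_Ioo isPreconnected_Ioo
      (fun n y hy => hderiv y hy n) (fun n y hy => hGbd y hy n) ht hg0 hr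
  -- the derivative vanishes
  have hGzero : ∀ r ∈ Set.Ioo a b, (∑' n, G n r) = 0 := by
    intro r hr
    have hqs : Summable (fun n => q r n) := by
      apply Summable.of_norm_bounded ((hMsum.add hsum2).div_const 2)
      intro n
      simpa [Real.norm_eq_abs] using hqbd r hr n
    have hqs' : Summable (fun n : ℤ => q r (n - 1)) :=
      hqs.comp_injective sub_left_injective
    have hshift : (∑' n : ℤ, q r (n - 1)) = ∑' n, q r n := by
      simpa using (Equiv.subRight (1 : ℤ)).tsum_eq (fun n => q r n)
    calc (∑' n, G n r) = ∑' n : ℤ, (-2) * (q r n - q r (n - 1)) := rfl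
      _ = (-2) * ∑' n : ℤ, (q r n - q r (n - 1)) := tsum_mul_left
      _ = (-2) * ((∑' n, q r n) - ∑' n : ℤ, q r (n - 1)) := by rw [Summable.tsum_sub hqs hqs']
      _ = 0 := by rw [hshift]; ring
  -- constancy
  have key : ∀ t₁ ∈ Set.Ioo a b, ∀ s₁ ∈ Set.Ioo a b, t₁ ≤ s₁ →
      (∑' n, g n t₁) = ∑' n, g n s₁ := by
    intro t₁ ht₁ s₁ hs₁ hle
    have hsub : Set.Icc t₁ s₁ ⊆ Set.Ioo a b := fun x hx =>
      ⟨lt_of_lt_of_le ht₁.1 hx.1, lt_of_le_of_lt hx.2 hs₁.2⟩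
    have := constant_of_has_deriv_right_zero (f := fun y => ∑' n, g n y)
      (a := t₁) (b := s₁)
      (fun x hx => ((hN x (hsub hx)).continuousAt).continuousWithinAt)
      (fun x hx => by
        have hx' : x ∈ Set.Ioo a b := hsub ⟨hx.1, le_of_lt hx.2⟩
        have := (hN x hx').hasDerivWithinAt (s := Set.Ici x)
        rwa [hGzero x hx'] at this)
      s₁ (Set.right_mem_Icc.2 hle)
    exact this.symm
  rcases le_total t s with hts | hst
  · exact key t ht s hs hts
  · exact (key s hs t ht hst).symm
end

section
/- Let h > 0, δ ∈ ℝ, let J ⊂ ℝ be an open interval, and let u, v : J → (ℤ → ℂ) be such that each u_n, v_n is differentiable on J and satisfies i u̇_n = −Δ₂u_n − (|u_n|²+|v_n|²)(u_{n+1}+u_{n−1}) + δ v_n and i v̇_n = −Δ₂v_n − (|v_n|²+|u_n|²)(v_{n+1}+v_{n−1}) + δ u_n, where Δ₂w_n = (w_{n+1}−2w_n+w_{n−1})/h². Assume there is a summable sequence (M_n)_{n∈ℤ} of nonnegative reals with |u_n(t)|² + |v_n(t)|² ≤ M_n for all t ∈ J, n ∈ ℤ. Then the function N(t) = Σ_{n∈ℤ}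 ln(1 + h²(|u_n(t)|² + |v_n(t)|²)) is constant on J; in particular the linear coupling conserves the total deformed norm (but not the individual component norms). -/
private lemma normsq_c (z : ℂ) : ‖z‖ ^ 2 = z.re ^ 2 + z.im ^ 2 := by
  rw [Complex.sq_norm, Complex.normSq_apply]; ring

private lemma neg_I_mul (x A : ℂ) (hx : Complex.I * x = A) : x = -Complex.I * A := by
  rw [← hx]; linear_combination x * Complex.I_sq

private def Pfun (u v : ℝ → ℤ → ℂ) (n : ℤ) (τ : ℝ) : ℝ :=
  ((starRingEnd ℂ) (u τ n) * u τ (n + 1)).im + ((starRingEnd ℂ) (v τ n) * v τ (n + 1)).im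

private lemma dnls_key (h δ r1 r2 : ℝ) (hh : h ≠ 0) (p p1 p2 q q1 q2 : ℂ)
    (hr1 : r1 = (p.re ^ 2 + p.im ^ 2) + (q.re ^ 2 + q.im ^ 2))
    (hr2 : r2 = (q.re ^ 2 + q.im ^ 2) + (p.re ^ 2 + p.im ^ 2)) :
    h ^ 2 * (((starRingEnd ℂ) (-Complex.I * (-((p1 - 2 * p + p2) / (h : ℂ) ^ 2) - (r1 : ℂ) * (p1 + p2) + (δ : ℂ) * q)) * p
        + (starRingEnd ℂ) p * (-Complex.I * (-((p1 - 2 * p + p2) / (h : ℂ) ^ 2) - (r1 : ℂ) * (p1 + p2) + (δ : ℂ) * q))).re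
      + ((starRingEnd ℂ) (-Complex.I * (-((q1 - 2 * q + q2) / (h : ℂ) ^ 2) - (r2 : ℂ) * (q1 + q2) + (δ : ℂ) * p)) * q
        + (starRingEnd ℂ) q * (-Complex.I * (-((q1 - 2 * q + q2) / (h : ℂ) ^ 2) - (r2 : ℂ) * (q1 + q2) + (δ : ℂ) * p))).re)
      / (1 + h ^ 2 * r1)
    = -2 * ((((starRingEnd ℂ) p * p1).im + ((starRingEnd ℂ) q * q1).im)
        - (((starRingEnd ℂ) p2 * p).im + ((starRingEnd ℂ) q2 * q).im)) := by
  have hden : (0:ℝ) < 1 + h ^ 2 * r1 := by subst hr1; positivity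
  subst hr1 hr2
  simp only [div_eq_mul_inv, ← Complex.ofReal_pow, ← Complex.ofReal_inv,
    Complex.mul_re, Complex.mul_im, Complex.add_re, Complex.add_im, Complex.sub_re,
    Complex.sub_im, Complex.neg_re, Complex.neg_im, Complex.I_re, Complex.I_im,
    Complex.conj_re, Complex.conj_im, Complex.ofReal_re, Complex.ofReal_im,
    Complex.ofReal_add, Complex.ofReal_mul]
  simp only [Complex.re_ofNat, Complex.im_ofNat]
  field_simp
  ring

/-- The linearly coupled DNLS flow conserves the deformed total norm
`N(t) = Σₙ ln(1 + h²(|uₙ|² + |vₙ|²))` (though not the individual component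
norms). -/
theorem deformed_norm_conserved_linear_coupling (h δ : ℝ) (hh : 0 < h) (a b : ℝ)
    (u v du dv : ℝ → ℤ → ℂ)
    (hu : ∀ t ∈ Set.Ioo a b, ∀ n : ℤ, HasDerivAt (fun s => u s n) (du t n) t)
    (hv : ∀ t ∈ Set.Ioo a b, ∀ n : ℤ, HasDerivAt (fun s => v s n) (dv t n) t)
    (hequ : ∀ t ∈ Set.Ioo a b, ∀ n : ℤ,
      Complex.I * du t n =
        -((u t (n + 1) - 2 * u t n + u t (n - 1)) / (h : ℂ) ^ 2) -
          ((‖u t n‖ ^ 2 + ‖v t n‖ ^ 2 : ℝ) : ℂ) * (u t (n + 1) + u t (n - 1)) +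
          (δ : ℂ) * v t n)
    (heqv : ∀ t ∈ Set.Ioo a b, ∀ n : ℤ,
      Complex.I * dv t n =
        -((v t (n + 1) - 2 * v t n + v t (n - 1)) / (h : ℂ) ^ 2) -
          ((‖v t n‖ ^ 2 + ‖u t n‖ ^ 2 : ℝ) : ℂ) * (v t (n + 1) + v t (n - 1)) +
          (δ : ℂ) * u t n)
    (M : ℤ → ℝ) (hM0 : ∀ n, 0 ≤ M n) (hMsum : Summable M)
    (hbd : ∀ t ∈ Set.Ioo a b, ∀ n : ℤ, ‖u t n‖ ^ 2 + ‖v t n‖ ^ 2 ≤ M n) :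
    ∀ t ∈ Set.Ioo a b, ∀ s ∈ Set.Ioo a b,
      (∑' n : ℤ, Real.log (1 + h ^ 2 * (‖u t n‖ ^ 2 + ‖v t n‖ ^ 2))) =
        ∑' n : ℤ, Real.log (1 + h ^ 2 * (‖u s n‖ ^ 2 + ‖v s n‖ ^ 2)) := by
  have hden : ∀ (τ : ℝ) (n : ℤ), (0:ℝ) < 1 + h ^ 2 * (‖u τ n‖ ^ 2 + ‖v τ n‖ ^ 2) := by
    intro τ n; positivity
  -- the key derivative computation
  have keyD : ∀ τ ∈ Set.Ioo a b, ∀ n : ℤ,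
      HasDerivAt (fun σ => Real.log (1 + h ^ 2 * (‖u σ n‖ ^ 2 + ‖v σ n‖ ^ 2)))
        (-2 * (Pfun u v n τ - Pfun u v (n - 1) τ)) τ := by
    intro τ hτ n
    have h1 := hu τ hτ n
    have h2 := hv τ hτ n
    have hDu : HasDerivAt (fun σ => ‖u σ n‖ ^ 2)
        (((starRingEnd ℂ) (du τ n) * u τ n + (starRingEnd ℂ) (u τ n) * du τ n).re) τ := by
      have e1 : (fun σ => ‖u σ n‖ ^ 2) = fun σ => ((starRingEnd ℂ) (u σ n) * u σ n).re := by
        funext σ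
        simp [Complex.mul_re, Complex.sq_norm, Complex.normSq_apply]
      rw [e1]
      exact Complex.reCLM.hasFDerivAt.comp_hasDerivAt τ
        ((HasDerivAt.star h1 : HasDerivAt (fun σ => (starRingEnd ℂ) (u σ n)) _ τ).mul h1)
    have hDv : HasDerivAt (fun σ => ‖v σ n‖ ^ 2)
        (((starRingEnd ℂ) (dv τ n) * v τ n + (starRingEnd ℂ) (v τ n) * dv τ n).re) τ := by
      have e1 : (fun σ => ‖v σ n‖ ^ 2) = fun σ => ((starRingEnd ℂ) (v σ n) * v σ n).re := by
        funext σ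
        simp [Complex.mul_re, Complex.sq_norm, Complex.normSq_apply]
      rw [e1]
      exact Complex.reCLM.hasFDerivAt.comp_hasDerivAt τ
        ((HasDerivAt.star h2 : HasDerivAt (fun σ => (starRingEnd ℂ) (v σ n)) _ τ).mul h2)
    have hD := ((hDu.add hDv).const_mul (h ^ 2)).const_add 1
    have hlog := hD.log (ne_of_gt (hden τ n))
    convert hlog using 1
    · rfl
    have hduEq := neg_I_mul _ _ (hequ τ hτ n)
    have hdvEq := neg_I_mul _ _ (heqv τ hτ n)
    rw [hduEq, hdvEq]
    have e := dnls_key h δ (‖u τ n‖ ^ 2 + ‖v τ n‖ ^ 2) (‖v τ n‖ ^ 2 + ‖u τ n‖ ^ 2) hh.ne'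
      (u τ n) (u τ (n + 1)) (u τ (n - 1)) (v τ n) (v τ (n + 1)) (v τ (n - 1))
      (by rw [normsq_c, normsq_c]) (by rw [normsq_c, normsq_c])
    simp only [Pfun, sub_add_cancel]
    exact e.symm
  -- continuity
  have hcu : ∀ n : ℤ, ContinuousOn (fun τ => u τ n) (Set.Ioo a b) :=
    fun n x hx => ((hu x hx n).continuousAt).continuousWithinAt
  have hcv : ∀ n : ℤ, ContinuousOn (fun τ => v τ n) (Set.Ioo a b) :=
    fun n x hx => ((hv x hx n).continuousAt).continuousWithinAt
  have hPc : ∀ n : ℤ, ContinuousOn (Pfun u v n) (Set.Ioo a b) := by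
    intro n
    apply ContinuousOn.add
    · exact Complex.continuous_im.comp_continuousOn (((hcu n).star).mul (hcu (n + 1)))
    · exact Complex.continuous_im.comp_continuousOn (((hcv n).star).mul (hcv (n + 1)))
  intro t ht s hs
  have hsub : Set.uIcc s t ⊆ Set.Ioo a b := Set.OrdConnected.uIcc_subset Set.ordConnected_Ioo hs ht
  have hint : ∀ n : ℤ, IntervalIntegrable (Pfun u v n) MeasureTheory.volume s t :=
    fun n => ((hPc n).mono hsub).intervalIntegrable
  set A : ℤ → ℝ := fun n => ∫ τ in s..t, Pfun u v n τ with hA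
  have hftc : ∀ n : ℤ,
      Real.log (1 + h ^ 2 * (‖u t n‖ ^ 2 + ‖v t n‖ ^ 2)) -
        Real.log (1 + h ^ 2 * (‖u s n‖ ^ 2 + ‖v s n‖ ^ 2)) = -2 * (A n - A (n - 1)) := by
    intro n
    have hig : IntervalIntegrable (fun τ => -2 * (Pfun u v n τ - Pfun u v (n - 1) τ))
        MeasureTheory.volume s t := by
      apply ContinuousOn.intervalIntegrable
      exact (continuousOn_const.mul (((hPc n).sub (hPc (n - 1))).mono hsub))
    have h1 := intervalIntegral.integral_eq_sub_of_hasDerivAt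
      (f := fun σ => Real.log (1 + h ^ 2 * (‖u σ n‖ ^ 2 + ‖v σ n‖ ^ 2)))
      (fun x hx => keyD x (hsub hx) n) hig
    rw [← h1, intervalIntegral.integral_const_mul,
      intervalIntegral.integral_sub (hint n) (hint (n - 1))]
  -- bounds on P
  have hPbd : ∀ n : ℤ, ∀ x ∈ Set.Ioo a b, |Pfun u v n x| ≤ (M n + M (n + 1)) / 2 := by
    intro n x hx
    have h1 := hbd x hx n
    have h2 := hbd x hx (n + 1)
    have e1 : |((starRingEnd ℂ) (u x n) * u x (n + 1)).im| ≤ ‖u x n‖ * ‖u x (n + 1)‖ := by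
      calc |((starRingEnd ℂ) (u x n) * u x (n + 1)).im| ≤ ‖(starRingEnd ℂ) (u x n) * u x (n + 1)‖ := by
            exact Complex.abs_im_le_norm _
        _ = ‖u x n‖ * ‖u x (n + 1)‖ := by
            simp [norm_mul]
    have e2 : |((starRingEnd ℂ) (v x n) * v x (n + 1)).im| ≤ ‖v x n‖ * ‖v x (n + 1)‖ := by
      calc |((starRingEnd ℂ) (v x n) * v x (n + 1)).im| ≤ ‖(starRingEnd ℂ) (v x n) * v x (n + 1)‖ := by
            exact Complex.abs_im_le_norm _
        _ = ‖v x n‖ * ‖v x (n + 1)‖ := by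
            simp [norm_mul]
    have e3 := abs_add_le (((starRingEnd ℂ) (u x n) * u x (n + 1)).im)
      (((starRingEnd ℂ) (v x n) * v x (n + 1)).im)
    simp only [Pfun]
    nlinarith [sq_nonneg (‖u x n‖ - ‖u x (n + 1)‖), sq_nonneg (‖v x n‖ - ‖v x (n + 1)‖)]
  have hAbd : ∀ n : ℤ, |A n| ≤ (M n + M (n + 1)) / 2 * |t - s| := by
    intro n
    have := intervalIntegral.norm_integral_le_of_norm_le_const
      (C := (M n + M (n + 1)) / 2) (f := Pfun u v n) (a := s) (b := t)
      (fun x hx => by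
        rw [Real.norm_eq_abs]
        exact hPbd n x (hsub (Set.uIoc_subset_uIcc hx)))
    simpa [Real.norm_eq_abs] using this
  have hMshift : Summable (fun n : ℤ => M (n + 1)) := by
    exact (Equiv.addRight (1 : ℤ)).summable_iff.mpr hMsum
  have hAsum : Summable A := by
    apply Summable.of_norm_bounded (g := fun n => (M n + M (n + 1)) / 2 * |t - s|)
    · exact ((hMsum.add hMshift).div_const 2).mul_right _
    · intro n; rw [Real.norm_eq_abs]; exact hAbd n
  have hAsum' : Summable (fun n : ℤ => A (n - 1)) := by
    exact (Equiv.subRight (1 : ℤ)).summable_iff.mpr hAsum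
  -- summability of the log series
  have hlsum : ∀ r ∈ Set.Ioo a b,
      Summable (fun n : ℤ => Real.log (1 + h ^ 2 * (‖u r n‖ ^ 2 + ‖v r n‖ ^ 2))) := by
    intro r hr
    apply Summable.of_nonneg_of_le
      (fun n => Real.log_nonneg (le_add_of_nonneg_right (by positivity)))
      (fun n => ?_) (hMsum.mul_left (h ^ 2))
    calc Real.log (1 + h ^ 2 * (‖u r n‖ ^ 2 + ‖v r n‖ ^ 2))
        ≤ (1 + h ^ 2 * (‖u r n‖ ^ 2 + ‖v r n‖ ^ 2)) - 1 :=
          Real.log_le_sub_one_of_pos (hden r n)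
      _ = h ^ 2 * (‖u r n‖ ^ 2 + ‖v r n‖ ^ 2) := by ring
      _ ≤ h ^ 2 * M n := by nlinarith [hbd r hr n, sq_nonneg h]
  have hzero : ∑' n : ℤ,
      (Real.log (1 + h ^ 2 * (‖u t n‖ ^ 2 + ‖v t n‖ ^ 2)) -
        Real.log (1 + h ^ 2 * (‖u s n‖ ^ 2 + ‖v s n‖ ^ 2))) = 0 := by
    calc ∑' n : ℤ, (Real.log (1 + h ^ 2 * (‖u t n‖ ^ 2 + ‖v t n‖ ^ 2)) -
          Real.log (1 + h ^ 2 * (‖u s n‖ ^ 2 + ‖v s n‖ ^ 2)))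
        = ∑' n : ℤ, (-2 * (A n - A (n - 1))) := tsum_congr hftc
      _ = -2 * ∑' n : ℤ, (A n - A (n - 1)) := tsum_mul_left
      _ = -2 * ((∑' n : ℤ, A n) - ∑' n : ℤ, A (n - 1)) := by rw [Summable.tsum_sub hAsum hAsum']
      _ = 0 := by
          have e : ∑' n : ℤ, A (n - 1) = ∑' n : ℤ, A n := by
            simpa using (Equiv.subRight (1 : ℤ)).tsum_eq A
          rw [e]; ring
  have hfin := Summable.tsum_sub (hlsum t ht) (hlsum s hs)
  rw [hzero] at hfin
  exact sub_eq_zero.mp hfin.symm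
end

section
/- Let h > 0 and δ ∈ ℝ. Suppose ũ, ṽ : ℝ → (ℤ → ℂ) are such that each ũ_n, ṽ_n is differentiable and satisfies the uncoupled system i (d/dt)ũ_n = −Δ₂ũ_n − (|ũ_n|²+|ṽ_n|²)(ũ_{n+1}+ũ_{n−1}) and i (d/dt)ṽ_n = −Δ₂ṽ_n − (|ṽ_n|²+|ũ_n|²)(ṽ_{n+1}+ṽ_{n−1}), with Δ₂w_n = (w_{n+1}−2w_n+w_{n−1})/h². Define u_n(t) = cos(δt)·ũ_n(t) − i·sin(δt)·ṽ_n(t) and v_n(t) = −i·sin(δt)·ũ_n(t) + cos(δt)·ṽ_n(t). Then (u, v) satisfies the linearly coupled system i u̇_n = −Δ₂u_n − (|u_n|²+|v_n|²)(u_{n+1}+u_{n−1}) + δ v_n and i v̇_n = −Δ₂v_n − (|v_n|²+|u_n|²)(v_{n+1}+v_{n−1}) + δ u_n. In particular, the linear coupling can be factored out of the Manakov-type coupled DNLS dynamics by a time-dependent unitary rotation. -/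
lemma normsq_rot (c s : ℝ) (hcs : c^2 + s^2 = 1) (a b : ℂ) :
    ‖(c:ℂ)*a - Complex.I*(s:ℂ)*b‖^2 + ‖-Complex.I*(s:ℂ)*a + (c:ℂ)*b‖^2
      = ‖a‖^2 + ‖b‖^2 := by
  have key : ∀ z : ℂ, ((‖z‖^2 : ℝ) : ℂ) = z * starRingEnd ℂ z := fun z => by
    rw [← Complex.normSq_eq_norm_sq, Complex.mul_conj]
  apply Complex.ofReal_injective
  push_cast
  have e1 := key ((c:ℂ)*a - Complex.I*(s:ℂ)*b)
  have e2 := key (-Complex.I*(s:ℂ)*a + (c:ℂ)*b)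
  have e3 := key a
  have e4 := key b
  push_cast at e1 e2 e3 e4
  rw [e1, e2, e3, e4]
  simp only [map_sub, map_add, map_mul, map_neg, Complex.conj_ofReal, Complex.conj_I]
  have hcs' : (c:ℂ)^2 + (s:ℂ)^2 = 1 := by exact_mod_cast congrArg (Complex.ofReal) hcs
  linear_combination (a * starRingEnd ℂ a + b * starRingEnd ℂ b) * hcs' -
    (s:ℂ)^2 * (a * starRingEnd ℂ a + b * starRingEnd ℂ b) * Complex.I_sq

/-- The linear coupling can be factored out of the Manakov-type coupled DNLS
dynamics by the time-dependent unitary rotation with rows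
`(cos δt, −i sin δt)` and `(−i sin δt, cos δt)`: if `(ũ, ṽ)` solves the
uncoupled system, then the rotated pair `(u, v)` solves the linearly coupled
system. -/
theorem factor_out_linear_coupling (h δ : ℝ) (hh : 0 < h)
    (tu tv : ℝ → ℤ → ℂ)
    (htu : ∀ t : ℝ, ∀ n : ℤ,
      HasDerivAt (fun s => tu s n)
        (-Complex.I *
          (-((tu t (n + 1) - 2 * tu t n + tu t (n - 1)) / (h : ℂ) ^ 2) -
            ((‖tu t n‖ ^ 2 + ‖tv t n‖ ^ 2 : ℝ) : ℂ) * (tu t (n + 1) + tu t (n - 1)))) t)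
    (htv : ∀ t : ℝ, ∀ n : ℤ,
      HasDerivAt (fun s => tv s n)
        (-Complex.I *
          (-((tv t (n + 1) - 2 * tv t n + tv t (n - 1)) / (h : ℂ) ^ 2) -
            ((‖tv t n‖ ^ 2 + ‖tu t n‖ ^ 2 : ℝ) : ℂ) * (tv t (n + 1) + tv t (n - 1)))) t)
    (u v : ℝ → ℤ → ℂ)
    (hu : ∀ t : ℝ, ∀ n : ℤ,
      u t n = (Real.cos (δ * t) : ℂ) * tu t n - Complex.I * (Real.sin (δ * t) : ℂ) * tv t n)
    (hv : ∀ t : ℝ, ∀ n : ℤ,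
      v t n = -Complex.I * (Real.sin (δ * t) : ℂ) * tu t n + (Real.cos (δ * t) : ℂ) * tv t n) :
    ∀ t : ℝ, ∀ n : ℤ,
      HasDerivAt (fun s => u s n)
        (-Complex.I *
          (-((u t (n + 1) - 2 * u t n + u t (n - 1)) / (h : ℂ) ^ 2) -
            ((‖u t n‖ ^ 2 + ‖v t n‖ ^ 2 : ℝ) : ℂ) * (u t (n + 1) + u t (n - 1)) +
            (δ : ℂ) * v t n)) t ∧
      HasDerivAt (fun s => v s n)
        (-Complex.I *
          (-((v t (n + 1) - 2 * v t n + v t (n - 1)) / (h : ℂ) ^ 2) -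
            ((‖v t n‖ ^ 2 + ‖u t n‖ ^ 2 : ℝ) : ℂ) * (v t (n + 1) + v t (n - 1)) +
            (δ : ℂ) * u t n)) t := by
  intro t n
  have hcs : Real.cos (δ * t) ^ 2 + Real.sin (δ * t) ^ 2 = 1 := by
    rw [add_comm]; exact Real.sin_sq_add_cos_sq (δ * t)
  -- derivatives of the rotation coefficients (as complex-valued functions)
  have hδt : HasDerivAt (fun x : ℝ => δ * x) δ t := by
    simpa using (hasDerivAt_id t).const_mul δ
  have hcos : HasDerivAt (fun x : ℝ => ((Real.cos (δ * x) : ℝ) : ℂ)) ((-Real.sin (δ * t) * δ : ℝ) : ℂ) t :=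
    (((Real.hasDerivAt_cos (δ * t)).comp t hδt)).ofReal_comp
  have hsin : HasDerivAt (fun x : ℝ => ((Real.sin (δ * x) : ℝ) : ℂ)) ((Real.cos (δ * t) * δ : ℝ) : ℂ) t :=
    (((Real.hasDerivAt_sin (δ * t)).comp t hδt)).ofReal_comp
  -- norms are rotation invariant
  have hn1 : ‖(Real.cos (δ*t):ℂ)*(tu t n) - Complex.I*(Real.sin (δ*t):ℂ)*(tv t n)‖^2 +
      ‖-Complex.I*(Real.sin (δ*t):ℂ)*(tu t n) + (Real.cos (δ*t):ℂ)*(tv t n)‖^2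
      = ‖tu t n‖^2 + ‖tv t n‖^2 := normsq_rot _ _ hcs _ _
  have hn2 : ‖-Complex.I*(Real.sin (δ*t):ℂ)*(tu t n) + (Real.cos (δ*t):ℂ)*(tv t n)‖^2 +
      ‖(Real.cos (δ*t):ℂ)*(tu t n) - Complex.I*(Real.sin (δ*t):ℂ)*(tv t n)‖^2
      = ‖tv t n‖^2 + ‖tu t n‖^2 := by linarith
  constructor
  · have hd : HasDerivAt (fun x : ℝ => ((Real.cos (δ * x) : ℝ) : ℂ) * tu x n -
        Complex.I * (((Real.sin (δ * x) : ℝ) : ℂ) * tv x n))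
        (((-Real.sin (δ * t) * δ : ℝ) : ℂ) * tu t n + ((Real.cos (δ * t) : ℝ) : ℂ) * (-Complex.I *
          (-((tu t (n + 1) - 2 * tu t n + tu t (n - 1)) / (h : ℂ) ^ 2) -
            ((‖tu t n‖ ^ 2 + ‖tv t n‖ ^ 2 : ℝ) : ℂ) * (tu t (n + 1) + tu t (n - 1)))) -
         Complex.I * (((Real.cos (δ * t) * δ : ℝ) : ℂ) * tv t n + ((Real.sin (δ * t) : ℝ) : ℂ) * (-Complex.I *
          (-((tv t (n + 1) - 2 * tv t n + tv t (n - 1)) / (h : ℂ) ^ 2) -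
            ((‖tv t n‖ ^ 2 + ‖tu t n‖ ^ 2 : ℝ) : ℂ) * (tv t (n + 1) + tv t (n - 1)))))) t :=
      (hcos.mul (htu t n)).sub ((hsin.mul (htv t n)).const_mul Complex.I)
    have hfun : (fun x => u x n) = fun x : ℝ => ((Real.cos (δ * x) : ℝ) : ℂ) * tu x n -
        Complex.I * (((Real.sin (δ * x) : ℝ) : ℂ) * tv x n) := by
      funext x; rw [hu x n]; ring
    rw [hfun]
    convert hd using 1
    rw [hu t (n+1), hu t (n-1), hu t n, hv t n, hn1]
    push_cast
    linear_combination ((δ : ℂ) * Complex.sin ((δ : ℂ) * (t : ℂ)) * tu t n) * Complex.I_sq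
  · have hd : HasDerivAt (fun x : ℝ => -Complex.I * (((Real.sin (δ * x) : ℝ) : ℂ) * tu x n) +
        ((Real.cos (δ * x) : ℝ) : ℂ) * tv x n)
        (-Complex.I * (((Real.cos (δ * t) * δ : ℝ) : ℂ) * tu t n + ((Real.sin (δ * t) : ℝ) : ℂ) * (-Complex.I *
          (-((tu t (n + 1) - 2 * tu t n + tu t (n - 1)) / (h : ℂ) ^ 2) -
            ((‖tu t n‖ ^ 2 + ‖tv t n‖ ^ 2 : ℝ) : ℂ) * (tu t (n + 1) + tu t (n - 1))))) +
         (((-Real.sin (δ * t) * δ : ℝ) : ℂ) * tv t n + ((Real.cos (δ * t) : ℝ) : ℂ) * (-Complex.I *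
          (-((tv t (n + 1) - 2 * tv t n + tv t (n - 1)) / (h : ℂ) ^ 2) -
            ((‖tv t n‖ ^ 2 + ‖tu t n‖ ^ 2 : ℝ) : ℂ) * (tv t (n + 1) + tv t (n - 1)))))) t :=
      ((hsin.mul (htu t n)).const_mul (-Complex.I)).add (hcos.mul (htv t n))
    have hfun : (fun x => v x n) = fun x : ℝ => -Complex.I * (((Real.sin (δ * x) : ℝ) : ℂ) * tu x n) +
        ((Real.cos (δ * x) : ℝ) : ℂ) * tv x n := by
      funext x; rw [hv x n]; ring
    rw [hfun]
    convert hd using 1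
    rw [hv t (n+1), hv t (n-1), hv t n, hu t n, hn2]
    push_cast
    linear_combination ((δ : ℂ) * Complex.sin ((δ : ℂ) * (t : ℂ)) * tv t n) * Complex.I_sq
end

section
/- Let h > 0, ω, δ ∈ ℝ, and let (Q_n)_{n∈ℤ} be a real sequence satisfying the scalar stationary Ablowitz–Ladik equation Δ₂Q_n + ωQ_n + Q_n²(Q_{n+1}+Q_{n−1}) = 0 for all n, where Δ₂w_n = (w_{n+1}−2w_n+w_{n−1})/h². Then u_n(t) = cos(δt)·Q_n·e^{−iωt} and v_n(t) = −i·sin(δt)·Q_n·e^{−iωt} solve the linearly coupled DNLS system i u̇_n = −Δ₂u_n − (|u_n|²+|v_n|²)(u_{n+1}+u_{n−1}) + δ v_n, i v̇_n = −Δ₂v_n − (|v_n|²+|u_n|²)(v_{n+1}+v_{n−1}) + δ u_n, for all t ∈ ℝ and n ∈ ℤ. This is an exact Rabi-oscillation solution in which the soliton population beats between the two components with frequency δ. -/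
noncomputable section

/-- First component of the Rabi-oscillation solution. -/
def rabiU (δ ω : ℝ) (Q : ℤ → ℝ) (t : ℝ) (n : ℤ) : ℂ :=
  (Real.cos (δ * t) : ℂ) * (Q n : ℂ) * Complex.exp (-Complex.I * (ω : ℂ) * (t : ℂ))

/-- Second component of the Rabi-oscillation solution. -/
def rabiV (δ ω : ℝ) (Q : ℤ → ℝ) (t : ℝ) (n : ℤ) : ℂ :=
  -Complex.I * (Real.sin (δ * t) : ℂ) * (Q n : ℂ) * Complex.exp (-Complex.I * (ω : ℂ) * (t : ℂ))

/-- Exact Rabi-oscillation solution of the linearly coupled DNLS system: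
if `Q` solves the scalar stationary Ablowitz–Ladik equation with frequency `ω`,
then `uₙ(t) = cos(δt)·Qₙ·e^{−iωt}`, `vₙ(t) = −i sin(δt)·Qₙ·e^{−iωt}` solve the
linearly coupled DNLS system. -/
theorem rabi_oscillation_solution (h ω δ : ℝ) (hh : 0 < h) (Q : ℤ → ℝ)
    (hQ : ∀ n : ℤ,
      (Q (n + 1) - 2 * Q n + Q (n - 1)) / h ^ 2 + ω * Q n +
        Q n ^ 2 * (Q (n + 1) + Q (n - 1)) = 0) :
    ∀ t : ℝ, ∀ n : ℤ,
      HasDerivAt (fun s => rabiU δ ω Q s n)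
        (-Complex.I *
          (-((rabiU δ ω Q t (n + 1) - 2 * rabiU δ ω Q t n + rabiU δ ω Q t (n - 1)) / (h : ℂ) ^ 2) -
            ((‖rabiU δ ω Q t n‖ ^ 2 + ‖rabiV δ ω Q t n‖ ^ 2 : ℝ) : ℂ) *
              (rabiU δ ω Q t (n + 1) + rabiU δ ω Q t (n - 1)) +
            (δ : ℂ) * rabiV δ ω Q t n)) t ∧
      HasDerivAt (fun s => rabiV δ ω Q s n)
        (-Complex.I *
          (-((rabiV δ ω Q t (n + 1) - 2 * rabiV δ ω Q t n + rabiV δ ω Q t (n - 1)) / (h : ℂ) ^ 2) -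
            ((‖rabiV δ ω Q t n‖ ^ 2 + ‖rabiU δ ω Q t n‖ ^ 2 : ℝ) : ℂ) *
              (rabiV δ ω Q t (n + 1) + rabiV δ ω Q t (n - 1)) +
            (δ : ℂ) * rabiU δ ω Q t n)) t := by
  intro t n
  have hE : HasDerivAt (fun s : ℝ => Complex.exp (-Complex.I * (ω : ℂ) * (s : ℂ)))
      ((-Complex.I * ω) * Complex.exp (-Complex.I * (ω : ℂ) * (t : ℂ))) t := by
    have hc : HasDerivAt (fun s : ℝ => (-Complex.I * (ω : ℂ) * (s : ℂ)))
        (-Complex.I * ω) t := by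
      simpa using (Complex.ofRealCLM.hasDerivAt (x := t)).const_mul (-Complex.I * (ω : ℂ))
    simpa [mul_comm, Function.comp_def] using (Complex.hasDerivAt_exp (-Complex.I * (ω : ℂ) * (t : ℂ))).comp t hc
  have hcos : HasDerivAt (fun s : ℝ => ((Real.cos (δ * s) : ℝ) : ℂ))
      ((-Real.sin (δ * t) * δ : ℝ) : ℂ) t := by
    have : HasDerivAt (fun s : ℝ => Real.cos (δ * s)) (-Real.sin (δ * t) * δ) t := by
      simpa [mul_comm, Function.comp_def] using (Real.hasDerivAt_cos (δ * t)).comp t ((hasDerivAt_id t).const_mul δ)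
    exact this.ofReal_comp
  have hsin : HasDerivAt (fun s : ℝ => ((Real.sin (δ * s) : ℝ) : ℂ))
      ((Real.cos (δ * t) * δ : ℝ) : ℂ) t := by
    have : HasDerivAt (fun s : ℝ => Real.sin (δ * s)) (Real.cos (δ * t) * δ) t := by
      simpa [mul_comm, Function.comp_def] using (Real.hasDerivAt_sin (δ * t)).comp t ((hasDerivAt_id t).const_mul δ)
    exact this.ofReal_comp
  have key : ((Q (n + 1) : ℂ) - 2 * Q n + Q (n - 1)) / (h : ℂ) ^ 2 + (ω : ℂ) * Q n +
      (Q n : ℂ) ^ 2 * ((Q (n + 1) : ℂ) + Q (n - 1)) = 0 := by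
    have := congrArg (fun x : ℝ => (x : ℂ)) (hQ n)
    push_cast at this
    simpa using this
  have hnU : (‖rabiU δ ω Q t n‖ ^ 2 : ℝ) = Real.cos (δ * t) ^ 2 * Q n ^ 2 := by
    unfold rabiU
    simp only [norm_mul, Complex.norm_real, Complex.norm_exp]
    simp [mul_pow, sq_abs, -Complex.ofReal_cos]
  have hnV : (‖rabiV δ ω Q t n‖ ^ 2 : ℝ) = Real.sin (δ * t) ^ 2 * Q n ^ 2 := by
    unfold rabiV
    simp only [norm_mul, Complex.norm_real, Complex.norm_exp,
      norm_neg, Complex.norm_I]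
    simp [mul_pow, sq_abs, -Complex.ofReal_sin]
  have pyth : Complex.cos ((δ : ℂ) * (t : ℂ)) ^ 2 + Complex.sin ((δ : ℂ) * (t : ℂ)) ^ 2 = 1 :=
    Complex.cos_sq_add_sin_sq _
  have hsumU : ((‖rabiU δ ω Q t n‖ ^ 2 + ‖rabiV δ ω Q t n‖ ^ 2 : ℝ) : ℂ) = (Q n : ℂ) ^ 2 := by
    rw [hnU, hnV]; push_cast
    linear_combination ((Q n : ℂ)) ^ 2 * pyth
  have hsumV : ((‖rabiV δ ω Q t n‖ ^ 2 + ‖rabiU δ ω Q t n‖ ^ 2 : ℝ) : ℂ) = (Q n : ℂ) ^ 2 := by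
    rw [hnU, hnV]; push_cast
    linear_combination ((Q n : ℂ)) ^ 2 * pyth
  constructor
  · have hU : HasDerivAt (fun s : ℝ => rabiU δ ω Q s n)
        ((((-Real.sin (δ * t) * δ : ℝ) : ℂ) * (Q n : ℂ)) *
            Complex.exp (-Complex.I * (ω : ℂ) * (t : ℂ)) +
          (((Real.cos (δ * t) : ℝ) : ℂ) * (Q n : ℂ)) *
            ((-Complex.I * ω) * Complex.exp (-Complex.I * (ω : ℂ) * (t : ℂ)))) t := by
      show HasDerivAt (fun s : ℝ => ((Real.cos (δ * s) : ℝ) : ℂ) * (Q n : ℂ) *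
        Complex.exp (-Complex.I * (ω : ℂ) * (s : ℂ))) _ t
      exact (hcos.mul_const _).mul hE
    convert hU using 1
    rw [hsumU]
    unfold rabiU rabiV
    push_cast
    linear_combination (Complex.I * Complex.cos ((δ : ℂ) * (t : ℂ)) *
      Complex.exp (-Complex.I * (ω : ℂ) * (t : ℂ))) * key +
      (Complex.exp (-Complex.I * (ω : ℂ) * (t : ℂ)) * (Q n : ℂ) * (δ : ℂ) *
        Complex.sin ((δ : ℂ) * (t : ℂ))) * Complex.I_sq
  · have hV : HasDerivAt (fun s : ℝ => rabiV δ ω Q s n)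
        (((-Complex.I * ((Real.cos (δ * t) * δ : ℝ) : ℂ)) * (Q n : ℂ)) *
            Complex.exp (-Complex.I * (ω : ℂ) * (t : ℂ)) +
          ((-Complex.I * ((Real.sin (δ * t) : ℝ) : ℂ)) * (Q n : ℂ)) *
            ((-Complex.I * ω) * Complex.exp (-Complex.I * (ω : ℂ) * (t : ℂ)))) t := by
      show HasDerivAt (fun s : ℝ => -Complex.I * ((Real.sin (δ * s) : ℝ) : ℂ) * (Q n : ℂ) *
        Complex.exp (-Complex.I * (ω : ℂ) * (s : ℂ))) _ t
      exact (((hsin.const_mul (-Complex.I)).mul_const _)).mul hE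
    convert hV using 1
    rw [hsumV]
    unfold rabiU rabiV
    push_cast
    linear_combination (-Complex.I ^ 2 * Complex.sin ((δ : ℂ) * (t : ℂ)) *
      Complex.exp (-Complex.I * (ω : ℂ) * (t : ℂ))) * key

end
end

section
/- (Theorem 2 via an exact internal mode.) Let h > 0 and ω, δ ∈ ℝ, and let (Q_n)_{n∈ℤ} be a real sequence satisfying Δ₂Q_n + (ω−δ)Q_n + 2Q_n²(Q_{n+1}+Q_{n−1}) = 0 for all n, where Δ₂w_n = (w_{n+1}−2w_n+w_{n−1})/h² (so that u_n = v_n = Q_n e^{−iωt} is the symmetric solitary wave of the linearly coupled DNLS system). Then the function w_n(t) = Q_n·e^{2iδt} satisfies, for all t and n, the linearized antisymmetric equation i ẇ_n = −Δ₂w_n − ω w_n − 2Q_n²(w_{n+1}+w_{n−1}) − δ w_n, which governs perturbations u_n = (Q_n + a_n(t))e^{−iωt}, v_n = (Q_n − a_n(t))e^{−iωt} to linear order. Consequently, the linearization of the linearly coupled system about the symmetric solitary wave possesses a pair of purely imaginary eigenvalues λ = ±2iδ, directly proportional to the linear coupling δ, with exponentially decaying eigenfunctions whenever Q decays. -/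
noncomputable section

/-- The linearized operator governing antisymmetric perturbations about the
symmetric solitary wave of the linearly coupled DNLS system:
`ℒa = −Δ₂a − ωa − 2Q²(a₊+a₋) − δa`. -/
def Lanti (h ω δ : ℝ) (Q : ℤ → ℝ) (a : ℤ → ℂ) (n : ℤ) : ℂ :=
  -((a (n + 1) - 2 * a n + a (n - 1)) / (h : ℂ) ^ 2) - (ω : ℂ) * a n -
    2 * ((Q n : ℂ)) ^ 2 * (a (n + 1) + a (n - 1)) - (δ : ℂ) * a n

lemma Lanti_smul (h ω δ : ℝ) (Q : ℤ → ℝ) (a : ℤ → ℂ) (c : ℂ) (n : ℤ) :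
    Lanti h ω δ Q (fun m => c * a m) n = c * Lanti h ω δ Q a n := by
  simp only [Lanti]; ring

lemma Lanti_Q (h ω δ : ℝ) (hh : h ≠ 0) (Q : ℤ → ℝ)
    (hQ : ∀ n : ℤ,
      (Q (n + 1) - 2 * Q n + Q (n - 1)) / h ^ 2 + (ω - δ) * Q n +
        2 * Q n ^ 2 * (Q (n + 1) + Q (n - 1)) = 0) (n : ℤ) :
    Lanti h ω δ Q (fun m => (Q m : ℂ)) n = -2 * δ * Q n := by
  have key : (Q (n + 1) - 2 * Q n + Q (n - 1)) / h ^ 2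
      = -((ω - δ) * Q n + 2 * Q n ^ 2 * (Q (n + 1) + Q (n - 1))) := by
    linarith [hQ n]
  have hc : ((Q (n + 1) : ℂ) - 2 * Q n + Q (n - 1)) / (h : ℂ) ^ 2
      = -(((ω : ℂ) - δ) * Q n + 2 * (Q n : ℂ) ^ 2 * (Q (n + 1) + Q (n - 1))) := by
    have := congrArg (Complex.ofReal) key
    push_cast at this
    exact this
  simp only [Lanti]
  rw [hc]; ring

/-- Theorem 2 via an exact internal mode: `wₙ(t) = Qₙ e^{2iδt}` solves the
linearized antisymmetric equation `i ẇ = ℒw`, and consequently the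
linearization about the symmetric solitary wave possesses the pair of purely
imaginary eigenvalues `λ = ±2iδ`, with eigenfunctions (multiples of `Q`)
decaying exponentially whenever `Q` does. -/
theorem exact_internal_mode (h ω δ : ℝ) (hh : 0 < h) (Q : ℤ → ℝ)
    (hQ : ∀ n : ℤ,
      (Q (n + 1) - 2 * Q n + Q (n - 1)) / h ^ 2 + (ω - δ) * Q n +
        2 * Q n ^ 2 * (Q (n + 1) + Q (n - 1)) = 0)
    (w : ℝ → ℤ → ℂ)
    (hw : ∀ t : ℝ, ∀ n : ℤ,
      w t n = (Q n : ℂ) * Complex.exp (2 * Complex.I * (δ : ℂ) * (t : ℂ)))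
    (hQne : ∃ n : ℤ, Q n ≠ 0) :
    (∀ t : ℝ, ∀ n : ℤ,
      HasDerivAt (fun s => w s n) (-Complex.I * Lanti h ω δ Q (w t) n) t) ∧
    (∀ lam : ℂ, lam = 2 * (δ : ℂ) * Complex.I ∨ lam = -(2 * (δ : ℂ) * Complex.I) →
      ∃ aR aI : ℤ → ℂ,
        ¬(aR = 0 ∧ aI = 0) ∧
        (∀ n : ℤ, lam * aR n = Lanti h ω δ Q aI n ∧
                  lam * aI n = -Lanti h ω δ Q aR n) ∧
        (∀ C > (0 : ℝ), ∀ r ∈ Set.Ioo (0 : ℝ) 1,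
          (∀ n : ℤ, |Q n| ≤ C * r ^ n.natAbs) →
          ∃ C' > (0 : ℝ), ∀ n : ℤ, ‖aR n‖ + ‖aI n‖ ≤ C' * r ^ n.natAbs)) := by
  have hh' : h ≠ 0 := ne_of_gt hh
  have hLQ := Lanti_Q h ω δ hh' Q hQ
  constructor
  · intro t n
    set k : ℂ := 2 * Complex.I * (δ : ℂ)
    -- Lanti of w t equals exp(kt) * Lanti Q
    have hwfun : w t = fun m => Complex.exp (k * t) * (Q m : ℂ) := by
      funext m; rw [hw t m]; ring
    have hL : Lanti h ω δ Q (w t) n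
        = Complex.exp (k * t) * (-2 * δ * Q n) := by
      rw [hwfun, Lanti_smul, hLQ n]
    -- derivative
    have hderiv : HasDerivAt (fun s : ℝ => w s n)
        ((Q n : ℂ) * (Complex.exp (k * t) * k)) t := by
      have h1 : HasDerivAt (fun s : ℝ => k * (s : ℂ)) k t := by
        simpa using (Complex.ofRealCLM.hasDerivAt (x := t)).const_mul k
      have h2 := h1.cexp
      have h3 := h2.const_mul (Q n : ℂ)
      simp only [hw]
      convert h3 using 2 <;> ring
    convert hderiv using 1
    rw [hL]
    simp only [k]
    ring
  · rintro lam (rfl | rfl)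
    · refine ⟨fun m => (Q m : ℂ), fun m => -Complex.I * (Q m : ℂ), ?_, ?_, ?_⟩
      · rintro ⟨hR, _⟩
        obtain ⟨n, hn⟩ := hQne
        exact hn (by simpa using congrFun hR n)
      · intro n
        have h1 := Lanti_smul h ω δ Q (fun m => (Q m : ℂ)) (-Complex.I) n
        constructor
        · rw [h1, hLQ n]; ring
        · rw [hLQ n]; ring_nf; rw [Complex.I_sq]; ring
      · intro C hC r hr hdecay
        refine ⟨2 * C, by linarith, fun n => ?_⟩
        have := hdecay n
        simp only [norm_mul, norm_neg, Complex.norm_I, one_mul, Complex.norm_real,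
          Real.norm_eq_abs]
        nlinarith [abs_nonneg (Q n)]
    · refine ⟨fun m => (Q m : ℂ), fun m => Complex.I * (Q m : ℂ), ?_, ?_, ?_⟩
      · rintro ⟨hR, _⟩
        obtain ⟨n, hn⟩ := hQne
        exact hn (by simpa using congrFun hR n)
      · intro n
        have h1 := Lanti_smul h ω δ Q (fun m => (Q m : ℂ)) Complex.I n
        constructor
        · rw [h1, hLQ n]; ring
        · rw [hLQ n]; ring_nf; rw [Complex.I_sq]; ring
      · intro C hC r hr hdecay
        refine ⟨2 * C, by linarith, fun n => ?_⟩
        have := hdecay n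
        simp only [norm_mul, Complex.norm_I, one_mul, Complex.norm_real,
          Real.norm_eq_abs]
        nlinarith [abs_nonneg (Q n)]

end
end
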